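/- Let $R$ be a ring and $C_\bullet$ a connective chain complex of projective right $R$-modules (i.e. $C_p = 0$ for $p < 0$). If the cohomology groups $H^p(\mathrm{Hom}_R(C_\bullet, M))$ vanish for all $p$ and all right $R$-modules $M$, then $H_p(C_\bullet) = 0$ for all $p$. -/

import Mathlib

open CategoryTheory

universe u v

variable {R : Type u} [Ring R]

/-- Precomposition with a linear map, as an additive homomorphism between Hom-groups. -/
def precompHom {A B M : ModuleCat.{v} R} (d : A ⟶ B) : (B →ₗ[R] M) →+ (A →ₗ[R] M) where
  toFun f := f.comp d.hom
  map_zero' := by ext; simp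
  map_add' f g := by ext; simp

/-- The cochain complex `Hom_R(C_•, M)` of a connective chain complex `C_•` of
(left) `R`-modules with coefficients in an `R`-module `M`; its differentials are
induced by those of `C_•`.  Its `p`-th cohomology is `H^p(C_•; M)`. -/
noncomputable def homComplex (C : ChainComplex (ModuleCat.{v} R) ℕ) (M : ModuleCat.{v} R) :
    CochainComplex AddCommGrpCat.{v} ℕ :=
  CochainComplex.of (fun n => AddCommGrpCat.of (C.X n →ₗ[R] M))
    (fun n => AddCommGrpCat.ofHom (precompHom (C.d (n + 1) n)))
    (fun n => by
      ext f : 2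
      show (f.comp (C.d (n + 1) n).hom).comp (C.d (n + 2) (n + 1)).hom = 0
      rw [LinearMap.comp_assoc]
      have : (C.d (n + 1) n).hom.comp (C.d (n + 2) (n + 1)).hom
          = (C.d (n + 2) (n + 1) ≫ C.d (n + 1) n : C.X (n+2) ⟶ C.X n).hom := rfl
      rw [this, C.d_comp_d]
      simp)

lemma helperA (C : ChainComplex (ModuleCat.{v} R) ℕ) (M : ModuleCat.{v} R)
    (h0 : Limits.IsZero ((homComplex C M).homology 0))
    (f : C.X 0 →ₗ[R] M) (hf : f.comp (C.d 1 0).hom = 0) : f = 0 := by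
  have hex : (homComplex C M).ExactAt 0 :=
    (HomologicalComplex.exactAt_iff_isZero_homology _ _).mpr h0
  rw [HomologicalComplex.exactAt_iff' _ 0 0 1 (by simp) (by simp)] at hex
  rw [ShortComplex.ab_exact_iff] at hex
  obtain ⟨g, hg⟩ := hex f (by
    show ((homComplex C M).d 0 1) f = 0
    rw [show (homComplex C M).d 0 1 = AddCommGrpCat.ofHom (precompHom (C.d 1 0)) from
      (by exact CochainComplex.of_d (fun n => AddCommGrpCat.of (C.X n →ₗ[R] M)) (fun n => AddCommGrpCat.ofHom (precompHom (C.d (n + 1) n))) 0)]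
    exact hf)
  rw [← hg]
  show ((homComplex C M).d 0 0) g = 0
  have : (homComplex C M).d 0 0 = 0 :=
    HomologicalComplex.shape _ 0 0 (by simp)
  rw [this]
  rfl

lemma helperB (C : ChainComplex (ModuleCat.{v} R) ℕ) (M : ModuleCat.{v} R) (p : ℕ)
    (h0 : Limits.IsZero ((homComplex C M).homology (p+1)))
    (f : C.X (p+1) →ₗ[R] M) (hf : f.comp (C.d (p+2) (p+1)).hom = 0) :
    ∃ g : C.X p →ₗ[R] M, f = g.comp (C.d (p+1) p).hom := by
  have hex : (homComplex C M).ExactAt (p+1) :=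
    (HomologicalComplex.exactAt_iff_isZero_homology _ _).mpr h0
  rw [HomologicalComplex.exactAt_iff' _ p (p+1) (p+2) (by simp) (by simp)] at hex
  rw [ShortComplex.ab_exact_iff] at hex
  obtain ⟨g, hg⟩ := hex f (by
    show ((homComplex C M).d (p+1) (p+2)) f = 0
    rw [show (homComplex C M).d (p+1) (p+2) = AddCommGrpCat.ofHom (precompHom (C.d (p+2) (p+1))) from
      (by exact CochainComplex.of_d (fun n => AddCommGrpCat.of (C.X n →ₗ[R] M)) (fun n => AddCommGrpCat.ofHom (precompHom (C.d (n + 1) n))) (p+1))]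
    exact hf)
  refine ⟨g, ?_⟩
  rw [← hg]
  show ((homComplex C M).d p (p+1)) g = g.comp (C.d (p+1) p).hom
  rw [show (homComplex C M).d p (p+1) = AddCommGrpCat.ofHom (precompHom (C.d (p+1) p)) from
    (by exact CochainComplex.of_d (fun n => AddCommGrpCat.of (C.X n →ₗ[R] M)) (fun n => AddCommGrpCat.ofHom (precompHom (C.d (n + 1) n))) p)]
  rfl

/-- Let `R` be a ring and `C_•` a connective chain complex of projective
`R`-modules.  If `H^p(Hom_R(C_•, M))` vanishes for all `p` and all `R`-modules `M`,
then `H_p(C_•) = 0` for all `p`. -/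
theorem homology_eq_zero_of_cohomology_eq_zero
    (C : ChainComplex (ModuleCat.{v} R) ℕ)
    (hproj : ∀ p, Module.Projective R (C.X p))
    (h : ∀ (M : ModuleCat.{v} R) (p : ℕ), Limits.IsZero ((homComplex C M).homology p)) :
    ∀ p, Limits.IsZero (C.homology p) := by
  intro p
  rw [← HomologicalComplex.exactAt_iff_isZero_homology]
  cases p with
  | zero =>
    rw [HomologicalComplex.exactAt_iff' C 1 0 0 (ChainComplex.prev ℕ 0)
        ChainComplex.next_nat_zero, ShortComplex.moduleCat_exact_iff]
    intro x _
    set N := LinearMap.range (C.d 1 0).hom with hN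
    have hm : N.mkQ = (0 : C.X 0 →ₗ[R] (C.X 0 ⧸ N)) :=
      helperA C (ModuleCat.of R (C.X 0 ⧸ N)) (h _ 0) N.mkQ
        (by ext y; exact (Submodule.Quotient.mk_eq_zero _).mpr ⟨y, rfl⟩)
    have hx0 : N.mkQ x = 0 := by rw [hm]; rfl
    replace hx0 := (Submodule.Quotient.mk_eq_zero N (x := x)).mp hx0
    obtain ⟨y, hy⟩ := hx0
    exact ⟨y, hy⟩
  | succ p =>
    rw [HomologicalComplex.exactAt_iff' C (p+2) (p+1) p (ChainComplex.prev ℕ (p+1))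
        (ChainComplex.next_nat_succ p), ShortComplex.moduleCat_exact_iff]
    intro x hx
    have hx' : C.d (p+1) p x = 0 := hx
    set N := LinearMap.range (C.d (p+2) (p+1)).hom with hN
    obtain ⟨g, hg⟩ := helperB C (ModuleCat.of R (C.X (p+1) ⧸ N)) p (h _ (p+1)) N.mkQ
      (by ext y; exact (Submodule.Quotient.mk_eq_zero _).mpr ⟨y, rfl⟩)
    have hx0 : N.mkQ x = 0 := by
      rw [hg]; show g ((C.d (p+1) p).hom x) = 0; rw [hx']; simp
    replace hx0 := (Submodule.Quotient.mk_eq_zero N (x := x)).mp hx0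
    obtain ⟨y, hy⟩ := hx0
    exact ⟨y, hy⟩
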